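/- arXiv:1702.08364 — 3 statements merged into one kernel-verified Lean document; each statement's English description precedes it below -/
import Mathlib

section
/- Let X be a nonempty topological space and let A be a group acting on X by homeomorphisms. Let N be a normal subgroup of A and let x₀ ∈ X be a point whose orbit N·x₀ is open and dense in X. Then the orbit N·x₀ is invariant under the whole group A: for every g ∈ A one has g·(N·x₀) = N·x₀. -/
open Pointwise

/-- Let `X` be a nonempty topological space and let `A` be a group acting on `X` by
homeomorphisms.  Let `N` be a normal subgroup of `A` and let `x₀ ∈ X` be a point whose
orbit `N • x₀` is open and dense in `X`.  Then the orbit `N • x₀` is invariant under the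
whole group `A`: for every `g ∈ A` one has `g • (N • x₀) = N • x₀`. -/
theorem orbit_invariant_of_normal_open_dense
    {X : Type*} [TopologicalSpace X] [Nonempty X]
    {A : Type*} [Group A] [MulAction A X] [ContinuousConstSMul A X]
    (N : Subgroup A) [N.Normal] (x₀ : X)
    (hopen : IsOpen (MulAction.orbit N x₀))
    (hdense : Dense (MulAction.orbit N x₀)) :
    ∀ g : A, g • (MulAction.orbit N x₀) = MulAction.orbit N x₀ := by
  intro g
  have hN : N.Normal := ‹_›
  have h1 : g • (MulAction.orbit N x₀) = MulAction.orbit N (g • x₀) := by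
    ext y
    simp only [Set.mem_smul_set, MulAction.mem_orbit_iff]
    constructor
    · rintro ⟨z, ⟨n, rfl⟩, rfl⟩
      refine ⟨⟨g * n * g⁻¹, hN.conj_mem n n.2 g⟩, ?_⟩
      simp [mul_smul, Subgroup.smul_def]
    · rintro ⟨n, rfl⟩
      refine ⟨((g⁻¹ * n * g : A)) • x₀,
        ⟨⟨g⁻¹ * (n : A) * g, by simpa using hN.conj_mem n n.2 g⁻¹⟩, rfl⟩, ?_⟩
      simp [mul_smul, Subgroup.smul_def]
  rw [h1]
  have hd2 : Dense (MulAction.orbit N (g • x₀)) := by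
    rw [← h1]; exact hdense.smul g
  obtain ⟨y, hy2, hy1⟩ := hd2.inter_open_nonempty _ hopen ⟨x₀, MulAction.mem_orbit_self x₀⟩
  calc MulAction.orbit N (g • x₀) = MulAction.orbit N y := (MulAction.orbit_eq_iff.mpr hy1).symm
    _ = MulAction.orbit N x₀ := MulAction.orbit_eq_iff.mpr hy2
end

section
/- Let n be a natural number and let φ be a ℂ-algebra automorphism of the Laurent polynomial algebra ℂ[ℤⁿ] (the monoid algebra AddMonoidAlgebra ℂ (Fin n → ℤ)). Then there exist a ℤ-linear automorphism M of ℤⁿ = (Fin n → ℤ) and a group homomorphism χ : ℤⁿ → ℂˣ (written additively to multiplicatively) such that for every a ∈ ℤⁿ one has φ(single a 1) = χ(a) • single (M a) 1, where single a 1 denotes the monomial with exponent vector a. -/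
/-!
Over a domain `k`, for an additive group `A` with the two-unique-sums property (such as `ℤⁿ`),
the units of `k[A]` are the monomials `u • single a 1` with `u : kˣ`: if `f * g = 1` and `f` or
`g` is not a monomial, two distinct pairs in `supp f × supp g` have uniquely attained sums, the
product has a nonzero coefficient at both, so both sums are `0`, contradicting uniqueness.
A `k`-algebra automorphism `φ` preserves units, hence `φ (single a 1) = χ a • single (M a) 1`;
multiplicativity of `φ` makes `M` additive and `χ` a character, and comparing with `φ.symm`
shows that `M` is bijective.
-/

namespace AddMonoidAlgebra

variable {k A B : Type*}

theorem exists_single_eq_of_mul_eq_one [Semiring k] [NoZeroDivisors k] [AddZeroClass A]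
    [TwoUniqueSums A] {f g : AddMonoidAlgebra k A} (h : f * g = 1) : ∃ a r, f = single a r := by
  classical
  obtain rfl | hg := eq_or_ne g 0
  · have : Subsingleton (AddMonoidAlgebra k A) := subsingleton_of_zero_eq_one (by simpa using h)
    exact ⟨0, 0, Subsingleton.elim _ _⟩
  have unique_sum_eq_zero : ∀ p ∈ f.coeff.support ×ˢ g.coeff.support,
      UniqueAdd f.coeff.support g.coeff.support p.1 p.2 → p.1 + p.2 = 0 := by
    intro p hp hu
    rw [Finset.mem_product, Finsupp.mem_support_iff, Finsupp.mem_support_iff] at hp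
    have hne : (f * g).coeff (p.1 + p.2) ≠ 0 :=
      coeff_mul_add_of_uniqueAdd hu ▸ mul_ne_zero hp.1 hp.2
    rw [h, one_def, coeff_single, Finsupp.single_apply_ne_zero] at hne
    exact hne.1
  have not_one_lt : ¬ 1 < f.coeff.support.card * g.coeff.support.card := by
    intro hcard
    obtain ⟨p, hp, q, hq, hpq, hup, huq⟩ := TwoUniqueSums.uniqueAdd_of_one_lt_card hcard
    have hq' := Finset.mem_product.1 hq
    have hsum : q.1 + q.2 = p.1 + p.2 := by
      rw [unique_sum_eq_zero p hp hup, unique_sum_eq_zero q hq huq]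
    exact hpq (Prod.ext_iff.2 (hup hq'.1 hq'.2 hsum)).symm
  have hg_card : 0 < g.coeff.support.card := Finset.card_pos.2 (by simpa using hg)
  have hf_card : f.coeff.support.card ≤ 1 := by nlinarith
  obtain ⟨a, r, hf⟩ := Finsupp.card_support_le_one'.1 hf_card
  exact ⟨a, r, coeff_injective hf⟩

theorem mul_eq_one_of_single_mul_single_eq_one [Semiring k] [AddZeroClass A] {a b : A} {r s : k}
    (h : single a r * single b s = 1) : r * s = 1 := by
  rw [single_mul_single, one_def, single_inj] at h
  rcases h with ⟨-, h⟩ | ⟨h, h'⟩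
  exacts [h, h.trans h'.symm]

theorem isUnit_iff_exists_single [Semiring k] [NoZeroDivisors k] [AddGroup A] [TwoUniqueSums A]
    {f : AddMonoidAlgebra k A} : IsUnit f ↔ ∃ a, ∃ u : kˣ, f = single a (u : k) := by
  constructor
  · rintro ⟨u, rfl⟩
    obtain ⟨a, r, ha⟩ := exists_single_eq_of_mul_eq_one u.mul_inv
    obtain ⟨b, s, hb⟩ := exists_single_eq_of_mul_eq_one u.inv_mul
    have hrs := mul_eq_one_of_single_mul_single_eq_one (ha ▸ hb ▸ u.mul_inv)
    have hsr := mul_eq_one_of_single_mul_single_eq_one (hb ▸ ha ▸ u.inv_mul)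
    exact ⟨a, ⟨r, s, hrs, hsr⟩, ha⟩
  · rintro ⟨a, u, rfl⟩
    exact ⟨⟨single a u, single (-a) ↑u⁻¹, by simp [one_def], by simp [one_def]⟩, rfl⟩

theorem exists_map_single_eq_smul_single [Semiring k] [NoZeroDivisors k] [Nontrivial k]
    [AddGroup A] [AddGroup B] [TwoUniqueSums A] [TwoUniqueSums B] {F : Type*}
    [FunLike F (AddMonoidAlgebra k A) (AddMonoidAlgebra k B)]
    [MonoidHomClass F (AddMonoidAlgebra k A) (AddMonoidAlgebra k B)] (ψ : F) :
    ∃ (m : A →+ B) (χ : Multiplicative A →* kˣ),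
      ∀ a, ψ (single a 1) = χ (Multiplicative.ofAdd a) • single (m a) 1 := by
  have : ∀ a : A, ∃ b, ∃ u : kˣ, ψ (single a 1) = single b (u : k) := fun a =>
    isUnit_iff_exists_single.1 ((isUnit_iff_exists_single.2 ⟨a, 1, rfl⟩).map ψ)
  choose m u hmu using this
  have hom : ∀ a b, m (a + b) = m a + m b ∧ u (a + b) = u a * u b := by
    intro a b
    have h := congrArg ψ (single_mul_single a b (1 : k) 1)
    rw [map_mul, hmu, hmu, single_mul_single, one_mul, hmu, single_inj] at h
    rcases h with ⟨hm, hu⟩ | ⟨-, h0⟩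
    · exact ⟨hm.symm, Units.ext hu.symm⟩
    · exact absurd h0 (Units.ne_zero _)
  refine ⟨AddMonoidHom.mk' m fun a b => (hom a b).1,
    MonoidHom.mk' (fun a => u a.toAdd) fun a b => (hom _ _).2, fun a => ?_⟩
  rw [hmu, Units.smul_def, smul_single', mul_one]
  rfl

theorem leftInverse_of_map_single_eq_smul_single [CommSemiring k] [Nontrivial k] [AddMonoid A]
    [AddMonoid B] {ψ : AddMonoidAlgebra k A → AddMonoidAlgebra k B}
    {ψ' : AddMonoidAlgebra k B →ₐ[k] AddMonoidAlgebra k A} (hψ'ψ : ∀ x, ψ' (ψ x) = x)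
    {m : A → B} {m' : B → A} {u : A → kˣ} {u' : B → kˣ}
    (hψ : ∀ a, ψ (single a 1) = u a • single (m a) 1)
    (hψ' : ∀ b, ψ' (single b 1) = u' b • single (m' b) 1) : Function.LeftInverse m' m := by
  intro a
  have h := hψ'ψ (single a 1)
  rw [hψ, Units.smul_def, map_smul, hψ', Units.smul_def, smul_single', smul_single', mul_one,
    single_inj] at h
  rcases h with ⟨h, -⟩ | ⟨-, h⟩
  exacts [h, absurd h one_ne_zero]

end AddMonoidAlgebra

namespace AlgEquiv

open AddMonoidAlgebra

theorem exists_addEquiv_map_single_eq_smul_single {k A B : Type*} [CommSemiring k]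
    [NoZeroDivisors k] [Nontrivial k] [AddGroup A] [AddGroup B] [TwoUniqueSums A]
    [TwoUniqueSums B] (φ : AddMonoidAlgebra k A ≃ₐ[k] AddMonoidAlgebra k B) :
    ∃ (M : A ≃+ B) (χ : Multiplicative A →* kˣ),
      ∀ a, φ (single a 1) = χ (Multiplicative.ofAdd a) • single (M a) 1 := by
  obtain ⟨m, χ, hφ⟩ := exists_map_single_eq_smul_single φ
  obtain ⟨m', χ', hφ'⟩ := exists_map_single_eq_smul_single φ.symm
  refine ⟨{ m with
      invFun := m'
      left_inv := leftInverse_of_map_single_eq_smul_single (ψ' := φ.symm.toAlgHom)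
        φ.symm_apply_apply hφ hφ'
      right_inv := leftInverse_of_map_single_eq_smul_single (ψ' := φ.toAlgHom)
        φ.apply_symm_apply hφ' hφ }, χ, hφ⟩

end AlgEquiv

/-- Every `ℂ`-algebra automorphism `φ` of the Laurent polynomial algebra
`ℂ[ℤⁿ] = AddMonoidAlgebra ℂ (Fin n → ℤ)` is "monomial": there are a `ℤ`-linear
automorphism `M` of `ℤⁿ` and a character `χ : ℤⁿ → ℂˣ` such that
`φ (single a 1) = χ a • single (M a) 1` for all `a`. -/
theorem algAut_addMonoidAlgebra_eq_monomial
    (n : ℕ)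
    (φ : AddMonoidAlgebra ℂ (Fin n → ℤ) ≃ₐ[ℂ] AddMonoidAlgebra ℂ (Fin n → ℤ)) :
    ∃ (M : (Fin n → ℤ) ≃ₗ[ℤ] (Fin n → ℤ))
      (χ : Multiplicative (Fin n → ℤ) →* ℂˣ),
      ∀ a : Fin n → ℤ,
        φ (AddMonoidAlgebra.single a 1)
          = χ (Multiplicative.ofAdd a) • AddMonoidAlgebra.single (M a) 1 := by
  obtain ⟨M, χ, hφ⟩ := φ.exists_addEquiv_map_single_eq_smul_single
  exact ⟨M.toIntLinearEquiv, χ, hφ⟩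
end

section
/- Let n be a natural number and let φ be a ℂ-algebra automorphism of the Laurent polynomial algebra ℂ[ℤⁿ] (the monoid algebra AddMonoidAlgebra ℂ (Fin n → ℤ)). Let ε : ℂ[ℤⁿ] → ℂ be the augmentation homomorphism, i.e., the ℂ-algebra map sending single a 1 to 1 for every a ∈ ℤⁿ (evaluation at the identity of the torus). If ε ∘ φ = ε, then there exists a ℤ-linear automorphism M of ℤⁿ = (Fin n → ℤ) such that φ(single a 1) = single (M a) 1 for every a ∈ ℤⁿ; that is, φ is induced by a group automorphism of ℤⁿ. -/
/-!
Each monomial `single a 1` is a unit, and over a coefficient domain with `TwoUniqueSums`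
exponents (such as `ℤⁿ`) every unit is a monomial. Hence `φ` sends monomials to scalar multiples
of monomials, preserving the augmentation forces the scalars to be `1`, and multiplicativity of
`φ` makes the induced permutation of exponents additive.
-/

open Finset Pointwise

namespace AddMonoidAlgebra

variable {R G : Type*}

/-- Unless `f` is a monomial (or `g = 0`), `TwoUniqueSums` gives two distinct pairs of exponents,
each the only contribution to its coefficient of `f * g = 1`; both sums are then `0`, contradicting
uniqueness. -/
lemma exists_eq_single_of_mul_eq_one [Semiring R] [NoZeroDivisors R] [AddZeroClass G]
    [TwoUniqueSums G] {f g : R[G]} (h : f * g = 1) : ∃ a c, f = single a c := by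
  classical
  have hcard : #f.coeff.support * #g.coeff.support ≤ 1 := by
    by_contra! hlt
    obtain ⟨p, hp, q, hq, hpq, hp_unique, hq_unique⟩ :=
      TwoUniqueSums.uniqueAdd_of_one_lt_card hlt
    rw [mem_product] at hp hq
    have sum_eq_zero {x y : G} (hxy : UniqueAdd f.coeff.support g.coeff.support x y)
        (hx : x ∈ f.coeff.support) (hy : y ∈ g.coeff.support) : x + y = 0 := by
      refine mem_zero.mp (support_coeff_one_subset (k := R) (Finsupp.mem_support_iff.mpr ?_))
      rw [← h, coeff_mul_add_of_uniqueAdd hxy]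
      exact mul_ne_zero (Finsupp.mem_support_iff.mp hx) (Finsupp.mem_support_iff.mp hy)
    obtain ⟨hpq₁, hpq₂⟩ := hp_unique hq.1 hq.2
      ((sum_eq_zero hq_unique hq.1 hq.2).trans (sum_eq_zero hp_unique hp.1 hp.2).symm)
    exact hpq (Prod.ext hpq₁ hpq₂).symm
  rcases g.coeff.support.eq_empty_or_nonempty with hg | hg
  · have hsub : Subsingleton R[G] := subsingleton_of_zero_eq_one <| by
      rw [← h, coeff_eq_zero.mp (Finsupp.support_eq_empty.mp hg), mul_zero]
    exact ⟨0, 0, Subsingleton.elim _ _⟩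
  · obtain ⟨a, c, hf⟩ := (Finsupp.card_support_le_one' (f := f.coeff)).mp <|
      le_of_mul_le_mul_right (by rw [one_mul]; exact hcard.trans hg.card_pos) hg.card_pos
    exact ⟨a, c, coeff_injective hf⟩

lemma apply_single_of_apply_single_one [CommSemiring R] [AddMonoid G] {ε : R[G] →ₐ[R] R}
    (hε : ∀ a, ε (single a 1) = 1) (a : G) (c : R) : ε (single a c) = c := by
  rw [← mul_one c, ← smul_eq_mul, ← smul_single, map_smul, hε, smul_eq_mul, mul_one]

lemma exists_apply_single_one_eq_single_one [CommSemiring R] [NoZeroDivisors R] [AddGroup G]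
    [TwoUniqueSums G] {ε : R[G] →ₐ[R] R} (hε : ∀ a, ε (single a 1) = 1) {ψ : R[G] →ₐ[R] R[G]}
    (hψ : ∀ f, ε (ψ f) = ε f) (a : G) : ∃ b, ψ (single a 1) = single b 1 := by
  have hunit : ψ (single a 1) * ψ (single (-a) 1) = 1 := by
    rw [← map_mul, single_mul_single, add_neg_cancel, one_mul, ← one_def, map_one]
  obtain ⟨b, c, hb⟩ := exists_eq_single_of_mul_eq_one hunit
  have hc : c = 1 := by
    rw [← apply_single_of_apply_single_one hε b c, ← hb, hψ, hε]
  exact ⟨b, hc ▸ hb⟩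

lemma exists_addEquiv_of_apply_single_one [CommSemiring R] [Nontrivial R] [AddMonoid G]
    (ψ : R[G] ≃ₐ[R] R[G]) (h : ∀ a, ∃ b, ψ (single a 1) = single b 1)
    (h_symm : ∀ a, ∃ b, ψ.symm (single a 1) = single b 1) :
    ∃ M : G ≃+ G, ∀ a, ψ (single a 1) = single (M a) 1 := by
  choose m hm using h
  choose m' hm' using h_symm
  have single_inj {x y : G} (hxy : single x (1 : R) = single y 1) : x = y :=
    single_left_injective one_ne_zero hxy
  refine ⟨{ toFun := m, invFun := m', left_inv := ?_, right_inv := ?_, map_add' := ?_ }, hm⟩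
  · intro a
    apply single_inj
    rw [← hm', ← hm, AlgEquiv.symm_apply_apply]
  · intro b
    apply single_inj
    rw [← hm, ← hm', AlgEquiv.apply_symm_apply]
  · intro a b
    apply single_inj
    have hsplit : single (a + b) (1 : R) = single a 1 * single b 1 := by
      rw [single_mul_single, one_mul]
    rw [← hm, hsplit, map_mul, hm, hm, single_mul_single, one_mul]

end AddMonoidAlgebra

/-- Let `φ` be a `ℂ`-algebra automorphism of the Laurent polynomial algebra
`ℂ[ℤⁿ] = AddMonoidAlgebra ℂ (Fin n → ℤ)` and let `ε : ℂ[ℤⁿ] → ℂ` be the augmentation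
(the `ℂ`-algebra map sending every monomial `single a 1` to `1`).  If `ε ∘ φ = ε`, then
`φ` is induced by a group automorphism of `ℤⁿ`: there is a `ℤ`-linear automorphism `M`
of `ℤⁿ` with `φ (single a 1) = single (M a) 1` for all `a`. -/
theorem algAut_addMonoidAlgebra_fixing_augmentation_eq_groupAut
    (n : ℕ)
    (φ : AddMonoidAlgebra ℂ (Fin n → ℤ) ≃ₐ[ℂ] AddMonoidAlgebra ℂ (Fin n → ℤ))
    (ε : AddMonoidAlgebra ℂ (Fin n → ℤ) →ₐ[ℂ] ℂ)
    (hε : ∀ a : Fin n → ℤ, ε (AddMonoidAlgebra.single a 1) = 1)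
    (hεφ : ∀ f : AddMonoidAlgebra ℂ (Fin n → ℤ), ε (φ f) = ε f) :
    ∃ M : (Fin n → ℤ) ≃ₗ[ℤ] (Fin n → ℤ),
      ∀ a : Fin n → ℤ,
        φ (AddMonoidAlgebra.single a 1) = AddMonoidAlgebra.single (M a) 1 := by
  have hεφ_symm : ∀ f, ε (φ.symm f) = ε f := fun f ↦ by rw [← hεφ, φ.apply_symm_apply]
  obtain ⟨M, hM⟩ := AddMonoidAlgebra.exists_addEquiv_of_apply_single_one φ
    (AddMonoidAlgebra.exists_apply_single_one_eq_single_one (ψ := φ.toAlgHom) hε hεφ)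
    (AddMonoidAlgebra.exists_apply_single_one_eq_single_one (ψ := φ.symm.toAlgHom) hε hεφ_symm)
  exact ⟨M.toIntLinearEquiv, hM⟩
end
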